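/- Let a ≥ √3/2 be real and let k be a positive integer with k(k+2) ≤ 4a². Then the number of a-admissible sequences (m₁,…,mₙ) whose first entry satisfies |m₁| = k/2 equals 2 + 2·N_≤(a − √(k(k+2))/2), where N_≤(b) denotes the total number of b-admissible sequences (so N_≤(b) = 0 for b < √3/2). -/

import Mathlib

/-!
Removing the first entry `j` of an `a`-admissible sequence with `|j| = k` leaves either the
empty list or an `(a - wt j)`-admissible sequence, and conversely. With two choices of sign for
`j`, this gives `2 · (1 + N_≤(a - wt j))` sequences. Finiteness of `adm a` comes from
`|j| ≤ 2 · wt j`, which bounds both the entries and the length of an admissible sequence.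
-/

/-- The weight of an entry `j : ℤ` encoding the nonzero half-integer `m = j/2`:
`√(|m|(|m|+1)) = √(|j|(|j|+2))/2`. -/
noncomputable def wt (j : ℤ) : ℝ := Real.sqrt (|(j : ℝ)| * (|(j : ℝ)| + 2)) / 2

/-- The set of `a`-admissible sequences: nonempty lists of nonzero half-integers
`mᵢ = jᵢ/2` with `∑ᵢ √(|mᵢ|(|mᵢ|+1)) ≤ a`. -/
def adm (a : ℝ) : Set (List ℤ) :=
  {l | l ≠ [] ∧ (∀ j ∈ l, j ≠ 0) ∧ (l.map wt).sum ≤ a}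

/-- `N_≤(a)`, the number of `a`-admissible sequences. -/
noncomputable def Nle (a : ℝ) : ℕ := Nat.card (adm a)

lemma List.finite_length_le_of_forall_mem {α : Type*} {s : Set α} (hs : s.Finite) (n : ℕ) :
    {l : List α | l.length ≤ n ∧ ∀ x ∈ l, x ∈ s}.Finite := by
  have := hs.to_subtype
  refine ((List.finite_length_le s n).image (List.map Subtype.val)).subset ?_
  rintro l ⟨hlen, hmem⟩
  exact ⟨l.attachWith (· ∈ s) hmem, by simpa using hlen, by simp⟩

lemma wt_nonneg (j : ℤ) : 0 ≤ wt j := by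
  unfold wt; positivity

lemma abs_le_two_mul_wt (j : ℤ) : |(j : ℝ)| ≤ 2 * wt j := by
  have hsq : |(j : ℝ)| ≤ √(|(j : ℝ)| * (|(j : ℝ)| + 2)) :=
    Real.le_sqrt_of_sq_le (by nlinarith [abs_nonneg (j : ℝ)])
  unfold wt; linarith

lemma one_le_two_mul_wt {j : ℤ} (hj : j ≠ 0) : 1 ≤ 2 * wt j := by
  have : (1 : ℝ) ≤ |(j : ℝ)| := by exact_mod_cast Int.one_le_abs hj
  linarith [abs_le_two_mul_wt j]

lemma wt_of_abs_eq {j : ℤ} {k : ℕ} (hj : |j| = k) :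
    wt j = √((k : ℝ) * ((k : ℝ) + 2)) / 2 := by
  rw [wt, ← Int.cast_abs, hj, Int.cast_natCast]

lemma wt_le_of_mem_adm {a : ℝ} {l : List ℤ} (hl : l ∈ adm a) {j : ℤ} (hj : j ∈ l) : wt j ≤ a :=
  (List.single_le_sum (by simp [wt_nonneg]) _ (List.mem_map_of_mem hj)).trans hl.2.2

lemma length_le_of_mem_adm {a : ℝ} {l : List ℤ} (hl : l ∈ adm a) : (l.length : ℝ) ≤ 2 * a := by
  have := List.card_nsmul_le_sum (l.map wt) (1 / 2) (by
    simp only [List.mem_map, forall_exists_index, and_imp, forall_apply_eq_imp_iff₂]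
    intro j hj; linarith [one_le_two_mul_wt (hl.2.1 j hj)])
  simp only [List.length_map, nsmul_eq_mul] at this
  linarith [hl.2.2]

lemma adm_finite (a : ℝ) : (adm a).Finite := by
  set N := ⌊2 * a⌋₊
  refine (List.finite_length_le_of_forall_mem (Set.finite_Icc (-(N : ℤ)) N) N).subset ?_
  intro l hl
  refine ⟨Nat.le_floor (length_le_of_mem_adm hl), fun j hj => ?_⟩
  have habs : (j.natAbs : ℝ) ≤ 2 * a := by
    rw [Nat.cast_natAbs, Int.cast_abs]
    linarith [abs_le_two_mul_wt j, wt_le_of_mem_adm hl hj]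
  have : j.natAbs ≤ N := Nat.le_floor habs
  rw [Set.mem_Icc]
  omega

lemma cons_mem_adm_iff {a : ℝ} {j : ℤ} {t : List ℤ} :
    j :: t ∈ adm a ↔ j ≠ 0 ∧ wt j ≤ a ∧ (t = [] ∨ t ∈ adm (a - wt j)) := by
  rcases eq_or_ne t [] with rfl | ht
  · simp [adm]
  · have hsum : 0 ≤ (t.map wt).sum := List.sum_nonneg (by simp [wt_nonneg])
    simp only [adm, Set.mem_ofPred_eq, ne_eq, reduceCtorEq, not_false_eq_true, ht,
      List.forall_mem_cons, List.map_cons, List.sum_cons, false_or, true_and]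
    constructor
    · rintro ⟨⟨hj, ht0⟩, hs⟩
      exact ⟨hj, by linarith, ht0, by linarith⟩
    · rintro ⟨hj, -, ht0, hs⟩
      exact ⟨⟨hj, ht0⟩, by linarith⟩

lemma card_adm_head_mem {a w : ℝ} {S : Set ℤ} (hS : ∀ j ∈ S, j ≠ 0 ∧ wt j = w) (hw : w ≤ a) :
    Nat.card {l : List ℤ | l ∈ adm a ∧ ∃ j t, l = j :: t ∧ j ∈ S} =
      Nat.card S * (1 + Nle (a - w)) := by
  have hset : {l : List ℤ | l ∈ adm a ∧ ∃ j t, l = j :: t ∧ j ∈ S} =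
      (fun p : ℤ × List ℤ => p.1 :: p.2) '' (S ×ˢ insert [] (adm (a - w))) := by
    ext l
    constructor
    · rintro ⟨hl, j, t, rfl, hj⟩
      obtain ⟨-, -, ht⟩ := cons_mem_adm_iff.1 hl
      rw [(hS j hj).2] at ht
      exact ⟨(j, t), ⟨hj, ht⟩, rfl⟩
    · rintro ⟨⟨j, t⟩, ⟨hj, ht⟩, rfl⟩
      obtain ⟨hj0, hwj⟩ := hS j hj
      exact ⟨cons_mem_adm_iff.2 ⟨hj0, hwj ▸ hw, hwj ▸ ht⟩, j, t, rfl, hj⟩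
  have hcons : Function.Injective (fun p : ℤ × List ℤ => p.1 :: p.2) := by
    rintro ⟨j, t⟩ ⟨j', t'⟩ h
    simpa using h
  rw [hset, Nat.card_image_of_injective hcons, Nat.card_coe_set_eq, Set.ncard_prod,
    Set.ncard_insert_of_notMem (fun h => h.1 rfl) (adm_finite _), Nle, Nat.card_coe_set_eq,
    Nat.card_coe_set_eq, add_comm]

/-- for `a ≥ √3/2` and a positive integer `k` with `k(k+2) ≤ 4a²`, the number
of `a`-admissible sequences whose first entry satisfies `|m₁| = k/2` equals
`2 + 2·N_≤(a - √(k(k+2))/2)`. -/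
theorem stmt_2 (a : ℝ) (ha : Real.sqrt 3 / 2 ≤ a) (k : ℕ) (hk : 0 < k)
    (hk2 : (k : ℝ) * ((k : ℝ) + 2) ≤ 4 * a ^ 2) :
    Nat.card {l : List ℤ | l ∈ adm a ∧ ∃ j t, l = j :: t ∧ |j| = (k : ℤ)} =
      2 + 2 * Nle (a - Real.sqrt ((k : ℝ) * ((k : ℝ) + 2)) / 2) := by
  have hS : ∀ j ∈ {j : ℤ | |j| = k}, j ≠ 0 ∧ wt j = √((k : ℝ) * ((k : ℝ) + 2)) / 2 :=
    fun j hj => ⟨by rintro rfl; simp at hj; omega, wt_of_abs_eq hj⟩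
  have hw : √((k : ℝ) * ((k : ℝ) + 2)) / 2 ≤ a := by
    have ha0 : 0 ≤ a := le_trans (by positivity) ha
    have : √((k : ℝ) * ((k : ℝ) + 2)) ≤ √((2 * a) ^ 2) := Real.sqrt_le_sqrt (by linarith)
    rw [Real.sqrt_sq (by positivity)] at this
    linarith
  have hcard : Nat.card {j : ℤ | |j| = k} = 2 := by
    have : {j : ℤ | |j| = k} = {(k : ℤ), -(k : ℤ)} := by
      ext j; simp [abs_eq (Int.natCast_nonneg k)]
    rw [this, Nat.card_coe_set_eq, Set.ncard_pair (by omega)]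
  calc _ = Nat.card {j : ℤ | |j| = k} * (1 + Nle _) := card_adm_head_mem hS hw
    _ = _ := by rw [hcard]; ring
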